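/- Let F be a distribution (probability measure) on ℝ with characteristic function Φ satisfying 1 - Φ(ξ) = (1 + v₀(ξ))|ξ|^λ where v₀ ∈ L^∞ and |v₀(ξ)| ≤ C|ξ|^δ for small |ξ|, with 1 < λ < 2 and δ > 0. Let g₀ be a probability density, ĝ(ξ,t) = e^{-|ξ|^λ t} ĝ₀(ξ), and ĝ_ε(ξ,t) = e^{-ε^{-λ} t (1-Φ(εξ))} ĝ₀(ξ). Then for any 0 < s < λ there is a constant C = C(λ,s,δ) such that d_s(g(t), g_ε(t)) ≤ C t^{s/(λ+δ)} ε^{sδ/(λ+δ)}. -/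

import Mathlib

/-!
Write `a = |ξ|^λ t` and `b = ε^{-λ} t (1 - Φ(εξ))`, so that `ĝ - ĝ_ε = (e^{-a} - e^{-b}) ĝ₀` with
`|ĝ₀| ≤ 1`. Since `|Φ| ≤ 1`, both exponents have nonnegative real part, hence
`|e^{-a} - e^{-b}| ≤ min(2, |a - b|) ≤ 2 |a - b|^θ` for every `θ ∈ [0, 1]`. The expansion of
`1 - Φ` gives `a - b = -|ξ|^λ t v₀(εξ)`, so `|a - b| ≤ C t ε^δ |ξ|^{λ+δ}`, and the choice
`θ = s/(λ+δ)` turns `|ξ|^{λ+δ}` into `|ξ|^s`, leaving the factor `(C t ε^δ)^θ`. The interpolation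
`min(1, y) ≤ y^θ` does the work of the optimisation over a cutoff radius.
-/

open MeasureTheory ENNReal

noncomputable def ft (f : ℝ → ℝ) (ξ : ℝ) : ℂ :=
  ∫ v : ℝ, (f v : ℂ) * Complex.exp (-(Complex.I * v * ξ))

noncomputable def dFour (s : ℝ) (f g : ℝ → ℝ) : ℝ≥0∞ :=
  ⨆ ξ : {x : ℝ // x ≠ 0}, ENNReal.ofReal (‖ft f ξ.1 - ft g ξ.1‖ / |ξ.1| ^ s)

def IsProbDensity (f : ℝ → ℝ) : Prop :=
  (∀ v, 0 ≤ f v) ∧ Integrable f ∧ ∫ v : ℝ, f v = 1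

open Complex

lemma norm_cexp_neg_le_one {x : ℂ} (hx : 0 ≤ x.re) : ‖cexp (-x)‖ ≤ 1 := by
  rw [norm_exp, neg_re, Real.exp_le_one_iff]
  linarith

lemma norm_cexp_neg_sub_cexp_neg_le {x y : ℂ} (hx : 0 ≤ x.re) (hy : 0 ≤ y.re) :
    ‖cexp (-x) - cexp (-y)‖ ≤ ‖x - y‖ := by
  have hderiv : ∀ w ∈ {c : ℂ | 0 ≤ c.re},
      HasDerivWithinAt (fun w ↦ cexp (-w)) (-cexp (-w)) {c | 0 ≤ c.re} w := fun w _ ↦ by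
    simpa using ((hasDerivAt_neg w).cexp).hasDerivWithinAt
  have hbound : ∀ w ∈ {c : ℂ | 0 ≤ c.re}, ‖-cexp (-w)‖ ≤ 1 := fun w hw ↦ by
    rw [norm_neg]
    exact norm_cexp_neg_le_one hw
  simpa using (convex_halfSpace_re_ge 0).norm_image_sub_le_of_norm_hasDerivWithin_le
    hderiv hbound hy hx

lemma norm_cexp_neg_sub_cexp_neg_le_rpow {x y : ℂ} (hx : 0 ≤ x.re) (hy : 0 ≤ y.re) {θ : ℝ}
    (hθ₀ : 0 ≤ θ) (hθ₁ : θ ≤ 1) : ‖cexp (-x) - cexp (-y)‖ ≤ 2 * ‖x - y‖ ^ θ := by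
  have hpow : 0 ≤ ‖x - y‖ ^ θ := by positivity
  rcases le_total ‖x - y‖ 1 with hle | hge
  · calc ‖cexp (-x) - cexp (-y)‖ ≤ ‖x - y‖ := norm_cexp_neg_sub_cexp_neg_le hx hy
      _ ≤ ‖x - y‖ ^ θ := Real.self_le_rpow_of_le_one (norm_nonneg _) hle hθ₁
      _ ≤ 2 * ‖x - y‖ ^ θ := by linarith
  · calc ‖cexp (-x) - cexp (-y)‖ ≤ ‖cexp (-x)‖ + ‖cexp (-y)‖ := norm_sub_le _ _
      _ ≤ 2 := by linarith [norm_cexp_neg_le_one hx, norm_cexp_neg_le_one hy]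
      _ ≤ 2 * ‖x - y‖ ^ θ := by linarith [Real.one_le_rpow hge hθ₀]

lemma IsProbDensity.norm_ft_le_one {g₀ : ℝ → ℝ} (h : IsProbDensity g₀) (ξ : ℝ) :
    ‖ft g₀ ξ‖ ≤ 1 := by
  calc ‖ft g₀ ξ‖
      ≤ ∫ v, ‖(g₀ v : ℂ) * cexp (-(I * v * ξ))‖ := norm_integral_le_integral_norm _
    _ = ∫ v, g₀ v := by
        congr 1 with v
        rw [norm_mul, norm_exp]
        simp [abs_of_nonneg (h.1 v), mul_re, mul_im]
    _ = 1 := h.2.2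

lemma norm_integral_cexp_le_one (μ : Measure ℝ) [IsProbabilityMeasure μ] (ξ : ℝ) :
    ‖∫ v, cexp (-(I * v * ξ)) ∂μ‖ ≤ 1 := by
  have hchar : ∫ v, cexp (-(I * v * ξ)) ∂μ = charFun μ (-ξ) := by
    rw [charFun_apply_real]
    congr 1 with v
    push_cast
    ring_nf
  rw [hchar]
  exact norm_charFun_le_one _

lemma exists_norm_le_mul_abs_rpow {E : Type*} [SeminormedAddCommGroup E] {f : ℝ → E}
    {B C₀ r δ : ℝ} (hB : ∀ ξ, ‖f ξ‖ ≤ B) (hr : 0 < r) (hδ : 0 ≤ δ)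
    (hsmall : ∀ ξ, |ξ| ≤ r → ‖f ξ‖ ≤ C₀ * |ξ| ^ δ) :
    ∃ C > 0, ∀ ξ, ‖f ξ‖ ≤ C * |ξ| ^ δ := by
  refine ⟨max (max C₀ (B / r ^ δ)) 1, by positivity, fun ξ ↦ ?_⟩
  rcases le_or_gt |ξ| r with hle | hgt
  · calc ‖f ξ‖ ≤ C₀ * |ξ| ^ δ := hsmall ξ hle
      _ ≤ _ := by gcongr; exact (le_max_left _ _).trans (le_max_left _ _)
  · have hrδ : 0 < r ^ δ := by positivity
    calc ‖f ξ‖ ≤ B := hB ξ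
      _ ≤ B / r ^ δ * |ξ| ^ δ := by
          rw [div_mul_eq_mul_div, le_div_iff₀ hrδ]
          gcongr
          exact (norm_nonneg _).trans (hB 0)
      _ ≤ _ := by gcongr; exact (le_max_right _ _).trans (le_max_left _ _)

lemma dFour_le_ofReal {s K : ℝ} {f g : ℝ → ℝ}
    (h : ∀ ξ ≠ 0, ‖ft f ξ - ft g ξ‖ ≤ K * |ξ| ^ s) : dFour s f g ≤ ENNReal.ofReal K := by
  refine iSup_le fun ξ ↦ ENNReal.ofReal_le_ofReal ?_
  have hpos : 0 < |ξ.1| ^ s := Real.rpow_pos_of_pos (abs_pos.mpr ξ.2) s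
  rw [div_le_iff₀ hpos]
  exact h ξ.1 ξ.2

section Rosenau

variable {lam δ C t ε : ℝ} {Φ v₀ : ℝ → ℂ}

lemma norm_rosenau_exponent_sub_le (hexp : ∀ ξ, 1 - Φ ξ = (1 + v₀ ξ) * (|ξ| ^ lam : ℝ))
    (hv : ∀ ξ, ‖v₀ ξ‖ ≤ C * |ξ| ^ δ) (ht : 0 ≤ t) (hε : 0 < ε) {ξ : ℝ} (hξ : ξ ≠ 0) :
    ‖((|ξ| ^ lam * t : ℝ) : ℂ) - (ε ^ (-lam) * t : ℝ) * (1 - Φ (ε * ξ))‖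
      ≤ C * t * ε ^ δ * |ξ| ^ (lam + δ) := by
  have hscale : ε ^ (-lam) * t * (ε ^ lam * |ξ| ^ lam) = |ξ| ^ lam * t := by
    rw [Real.rpow_neg hε.le]
    field_simp
  have hdiff : ((|ξ| ^ lam * t : ℝ) : ℂ) - (ε ^ (-lam) * t : ℝ) * (1 - Φ (ε * ξ))
      = -(((|ξ| ^ lam * t : ℝ) : ℂ) * v₀ (ε * ξ)) := by
    rw [hexp, abs_mul, abs_of_pos hε, Real.mul_rpow hε.le (abs_nonneg _), ← hscale]
    push_cast
    ring
  have hv' : ‖v₀ (ε * ξ)‖ ≤ C * (ε ^ δ * |ξ| ^ δ) := by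
    simpa [abs_mul, abs_of_pos hε, Real.mul_rpow hε.le (abs_nonneg _)] using hv (ε * ξ)
  rw [hdiff, norm_neg, norm_mul, norm_real, Real.norm_of_nonneg (by positivity),
    Real.rpow_add (abs_pos.mpr hξ)]
  calc |ξ| ^ lam * t * ‖v₀ (ε * ξ)‖ ≤ |ξ| ^ lam * t * (C * (ε ^ δ * |ξ| ^ δ)) := by gcongr
    _ = C * t * ε ^ δ * (|ξ| ^ lam * |ξ| ^ δ) := by ring

lemma norm_rosenau_multiplier_sub_le (hΦ : ∀ ξ, ‖Φ ξ‖ ≤ 1)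
    (hexp : ∀ ξ, 1 - Φ ξ = (1 + v₀ ξ) * (|ξ| ^ lam : ℝ)) (hv : ∀ ξ, ‖v₀ ξ‖ ≤ C * |ξ| ^ δ)
    (hC : 0 ≤ C) (ht : 0 ≤ t) (hε : 0 < ε) {s : ℝ} (hs : 0 < s) (hsδ : s ≤ lam + δ) {ξ : ℝ}
    (hξ : ξ ≠ 0) :
    ‖(Real.exp (-(|ξ| ^ lam) * t) : ℂ) - cexp (-(ε ^ (-lam) * t : ℝ) * (1 - Φ (ε * ξ)))‖
      ≤ 2 * C ^ (s / (lam + δ)) * t ^ (s / (lam + δ)) * ε ^ (s * δ / (lam + δ)) * |ξ| ^ s := by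
  have hlδ : 0 < lam + δ := hs.trans_le hsδ
  set θ := s / (lam + δ) with hθ
  have hθ₀ : 0 ≤ θ := by positivity
  have hθ₁ : θ ≤ 1 := (div_le_one hlδ).mpr hsδ
  have hδθ : δ * θ = s * δ / (lam + δ) := by rw [hθ]; ring
  have hlδθ : (lam + δ) * θ = s := by rw [hθ]; field_simp
  set x : ℂ := ((|ξ| ^ lam * t : ℝ) : ℂ)
  set y : ℂ := ((ε ^ (-lam) * t : ℝ) : ℂ) * (1 - Φ (ε * ξ))
  have hx : 0 ≤ x.re := by simp only [x, ofReal_re]; positivity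
  have hy : 0 ≤ y.re := by
    have hΦre : (Φ (ε * ξ)).re ≤ 1 := (re_le_norm _).trans (hΦ _)
    simp only [y, re_ofReal_mul, sub_re, one_re]
    exact mul_nonneg (by positivity) (by linarith)
  have hlhs : (Real.exp (-(|ξ| ^ lam) * t) : ℂ) - cexp (-(ε ^ (-lam) * t : ℝ) * (1 - Φ (ε * ξ)))
      = cexp (-x) - cexp (-y) := by
    simp only [x, y, ofReal_exp]
    push_cast
    ring_nf
  rw [hlhs]
  calc ‖cexp (-x) - cexp (-y)‖ ≤ 2 * ‖x - y‖ ^ θ :=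
        norm_cexp_neg_sub_cexp_neg_le_rpow hx hy hθ₀ hθ₁
    _ ≤ 2 * (C * t * ε ^ δ * |ξ| ^ (lam + δ)) ^ θ := by
        gcongr
        exact norm_rosenau_exponent_sub_le hexp hv ht hε hξ
    _ = 2 * C ^ θ * t ^ θ * ε ^ (s * δ / (lam + δ)) * |ξ| ^ s := by
        rw [Real.mul_rpow (by positivity) (by positivity),
          Real.mul_rpow (by positivity) (by positivity), Real.mul_rpow hC ht,
          ← Real.rpow_mul hε.le, ← Real.rpow_mul (abs_nonneg _), hδθ, hlδθ]
        ring

end Rosenau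

theorem rosenau_general_approx_general (lam δ : ℝ)
    (hδ : 0 < δ)
    (μ : Measure ℝ) [IsProbabilityMeasure μ]
    (Φ : ℝ → ℂ) (hΦ : ∀ ξ : ℝ, Φ ξ = ∫ v : ℝ, Complex.exp (-(Complex.I * v * ξ)) ∂μ)
    (v₀ : ℝ → ℂ)
    (hexp : ∀ ξ : ℝ, 1 - Φ ξ = (1 + v₀ ξ) * (|ξ| ^ lam : ℝ))
    (B : ℝ) (hB : ∀ ξ : ℝ, ‖v₀ ξ‖ ≤ B)
    (C₀ r : ℝ) (hr : 0 < r) (hsmall : ∀ ξ : ℝ, |ξ| ≤ r → ‖v₀ ξ‖ ≤ C₀ * |ξ| ^ δ) :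
    ∀ s : ℝ, 0 < s → s < lam →
      ∃ C : ℝ, 0 < C ∧
        ∀ g₀ : ℝ → ℝ, IsProbDensity g₀ →
          ∀ t ε : ℝ, 0 < t → 0 < ε →
            ∀ g gε : ℝ → ℝ,
              (∀ ξ : ℝ, ft g ξ = (Real.exp (-(|ξ| ^ lam) * t) : ℂ) * ft g₀ ξ) →
              (∀ ξ : ℝ, ft gε ξ =
                Complex.exp (-(ε ^ (-lam) * t : ℝ) * (1 - Φ (ε * ξ))) * ft g₀ ξ) →
              dFour s g gε ≤
                ENNReal.ofReal (C * t ^ (s / (lam + δ)) * ε ^ (s * δ / (lam + δ))) := by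
  intro s hs hslam
  obtain ⟨C, hC, hv⟩ := exists_norm_le_mul_abs_rpow hB hr hδ.le hsmall
  have hΦ₁ : ∀ ξ, ‖Φ ξ‖ ≤ 1 := fun ξ ↦ hΦ ξ ▸ norm_integral_cexp_le_one μ ξ
  refine ⟨2 * C ^ (s / (lam + δ)), by positivity, ?_⟩
  intro g₀ hg₀ t ε ht hε g gε hg hgε
  refine dFour_le_ofReal fun ξ hξ ↦ ?_
  rw [hg, hgε, ← sub_mul, norm_mul]
  exact (mul_le_of_le_one_right (norm_nonneg _) (hg₀.norm_ft_le_one ξ)).trans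
    (norm_rosenau_multiplier_sub_le hΦ₁ hexp hv hC.le ht.le hε hs (by linarith) hξ)

theorem rosenau_general_approx (lam δ : ℝ) (hlam1 : 1 < lam) (hlam2 : lam < 2)
    (hδ : 0 < δ)
    (μ : Measure ℝ) [IsProbabilityMeasure μ]
    (Φ : ℝ → ℂ) (hΦ : ∀ ξ : ℝ, Φ ξ = ∫ v : ℝ, Complex.exp (-(Complex.I * v * ξ)) ∂μ)
    (v₀ : ℝ → ℂ)
    (hexp : ∀ ξ : ℝ, 1 - Φ ξ = (1 + v₀ ξ) * (|ξ| ^ lam : ℝ))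
    (B : ℝ) (hB : ∀ ξ : ℝ, ‖v₀ ξ‖ ≤ B)
    (C₀ r : ℝ) (hr : 0 < r) (hsmall : ∀ ξ : ℝ, |ξ| ≤ r → ‖v₀ ξ‖ ≤ C₀ * |ξ| ^ δ) :
    ∀ s : ℝ, 0 < s → s < lam →
      ∃ C : ℝ, 0 < C ∧
        ∀ g₀ : ℝ → ℝ, IsProbDensity g₀ →
          ∀ t ε : ℝ, 0 < t → 0 < ε →
            ∀ g gε : ℝ → ℝ,
              (∀ ξ : ℝ, ft g ξ = (Real.exp (-(|ξ| ^ lam) * t) : ℂ) * ft g₀ ξ) →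
              (∀ ξ : ℝ, ft gε ξ =
                Complex.exp (-(ε ^ (-lam) * t : ℝ) * (1 - Φ (ε * ξ))) * ft g₀ ξ) →
              dFour s g gε ≤
                ENNReal.ofReal (C * t ^ (s / (lam + δ)) * ε ^ (s * δ / (lam + δ))) :=
  rosenau_general_approx_general lam δ hδ μ Φ hΦ v₀ hexp B hB C₀ r hr hsmall
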